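/- arXiv:2112.12479 — 2 statements merged into one kernel-verified Lean document; each statement's English description precedes it below -/
import Mathlib

section
/- Fix n ∈ ℕ and 0 ≤ k ≤ n. Let S̃_{n,k} ⊆ S_{n+1} be the set of permutations π with π(1) < ⋯ < π(n−k), π(n−k+1) = n+1, and π(n−k+2) > ⋯ > π(n+1), and let ω̃ = (s_n ⋯ s_{n−k+1})(s_n ⋯ s_{n−k+2}) ⋯ (s_n s_{n−1})(s_n) ∈ S_{n+1} (with ω̃ = id when k = 0). Then S̃_{n,k} = S_{n−k,k} · ω̃, where S_{n−k,k} ⊆ S_{n+1} is the set of (n−k)-shuffles of S_n (permutations σ ∈ S_n with σ(1) < ⋯ < σ(n−k) and σ(n−k+1) < ⋯ < σ(n)), viewed in S_{n+1}. -/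
/-!
Write `ω̃` for the permutation of the statement. Each factor `s_n ⋯ s_{n−j+1}` is the cycle
moving position `n−j+1` to `n+1` and shifting the positions after it down by one, and composing
these cycles for `j = k, k−1, …, 1` shows that `ω̃` fixes the first `n−k` positions and reverses
the block of the last `k+1`. So `ω̃` is an involution, and `π ∈ S̃_{n,k}` exactly when `π ω̃`
sends `n+1` to `n+1` (as `π(n−k+1) = n+1`) and increases on the first `n−k` and on the next
`k` positions (the decreasing tail of `π`, read backwards).
-/

namespace Stmt

/-- The adjacent transposition `s_{i+1} = (i, i+1)` (0-based) in the symmetric group on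
`Fin m`; indices out of range give the identity. -/
def sNat (m i : ℕ) : Equiv.Perm (Fin m) :=
  if h : i + 1 < m then Equiv.swap ⟨i, by omega⟩ ⟨i + 1, h⟩ else 1

/-- The permutation represented by a word in the adjacent transpositions. -/
def toPerm (m : ℕ) (l : List ℕ) : Equiv.Perm (Fin m) := (l.map (sNat m)).prod

/-- `l` is a reduced decomposition of `π`: it represents `π` and has minimal length among
all words representing `π`. -/
def IsReduced (m : ℕ) (l : List ℕ) (π : Equiv.Perm (Fin m)) : Prop :=
  toPerm m l = π ∧ ∀ l' : List ℕ, toPerm m l' = π → l.length ≤ l'.length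

end Stmt
namespace Stmt

/-- Membership in `S̃_{n,k} ⊆ S_{n+1}` (0-based positions): `π(1) < ⋯ < π(n−k)`,
`π(n−k+1) = n+1`, `π(n−k+2) > ⋯ > π(n+1)`. -/
def StildeP (n k : ℕ) (π : Equiv.Perm (Fin (n + 1))) : Prop :=
  (∀ a b : Fin (n + 1), a < b → (b : ℕ) < n - k → π a < π b) ∧
  π ⟨n - k, by omega⟩ = Fin.last n ∧
  (∀ a b : Fin (n + 1), n - k < (a : ℕ) → a < b → π b < π a)

end Stmt

namespace Stmt

/-- Membership of `σ ∈ S_{n−k,k} ⊆ S_n ⊆ S_{n+1}`: `σ` fixes the last point and is an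
`(n−k)`-shuffle of `S_n`, i.e. `σ(1) < ⋯ < σ(n−k)` and `σ(n−k+1) < ⋯ < σ(n)`
(0-based positions). -/
def ShuffleInSnP (n k : ℕ) (σ : Equiv.Perm (Fin (n + 1))) : Prop :=
  σ (Fin.last n) = Fin.last n ∧
  (∀ a b : Fin (n + 1), a < b → (b : ℕ) < n - k → σ a < σ b) ∧
  (∀ a b : Fin (n + 1), n - k ≤ (a : ℕ) → a < b → (b : ℕ) < n → σ a < σ b)

/-- The word (in 0-based generator indices) for
`ω̃ = (s_n ⋯ s_{n−k+1})(s_n ⋯ s_{n−k+2}) ⋯ (s_n s_{n−1})(s_n) ∈ S_{n+1}`. -/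
def omegaTildeList (n k : ℕ) : List ℕ :=
  (List.range k).flatMap (fun r => (List.range (k - r)).map (fun t => n - 1 - t))

lemma sNat_of_lt {m i : ℕ} (h : i + 1 < m) : sNat m i = Equiv.swap ⟨i, by omega⟩ ⟨i + 1, h⟩ :=
  dif_pos h

lemma toPerm_append (m : ℕ) (a b : List ℕ) : toPerm m (a ++ b) = toPerm m a * toPerm m b := by
  simp [toPerm]

lemma toPerm_singleton (m i : ℕ) : toPerm m [i] = sNat m i := by
  simp [toPerm]

/-- The word `[n−1, n−2, …, n−j]`, i.e. `s_n s_{n−1} ⋯ s_{n−j+1}` in 1-based generators. -/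
def descendingRun (n j : ℕ) : List ℕ := (List.range j).map (fun t => n - 1 - t)

lemma descendingRun_succ (n j : ℕ) :
    descendingRun n (j + 1) = descendingRun n j ++ [n - 1 - j] := by
  simp [descendingRun, List.range_succ]

lemma val_toPerm_descendingRun {n j : ℕ} (hj : j ≤ n) (i : Fin (n + 1)) :
    (toPerm (n + 1) (descendingRun n j) i : ℕ) =
      if (i : ℕ) < n - j then (i : ℕ) else if (i : ℕ) = n - j then n else (i : ℕ) - 1 := by
  induction j generalizing i with
  | zero =>
    simp only [descendingRun, toPerm, List.range_zero, List.map_nil, List.prod_nil,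
      Equiv.Perm.one_apply]
    split_ifs <;> omega
  | succ j ih =>
    rw [descendingRun_succ, toPerm_append, Equiv.Perm.mul_apply, toPerm_singleton,
      sNat_of_lt (by omega), Equiv.swap_apply_def]
    have := i.isLt
    simp only [apply_ite (fun x => (toPerm (n + 1) (descendingRun n j) x : ℕ)), ih (by omega),
      Fin.ext_iff]
    split_ifs <;> omega

lemma omegaTildeList_succ (n k : ℕ) :
    omegaTildeList n (k + 1) = descendingRun n (k + 1) ++ omegaTildeList n k := by
  simp [omegaTildeList, descendingRun, List.range_succ_eq_map, List.flatMap_map]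

def omegaTilde (n k : ℕ) : Equiv.Perm (Fin (n + 1)) := toPerm (n + 1) (omegaTildeList n k)

lemma val_omegaTilde {n k : ℕ} (hk : k ≤ n) (i : Fin (n + 1)) :
    (omegaTilde n k i : ℕ) = if (i : ℕ) < n - k then (i : ℕ) else 2 * n - k - i := by
  induction k with
  | zero =>
    simp only [omegaTilde, omegaTildeList, toPerm, List.range_zero, List.flatMap_nil,
      List.map_nil, List.prod_nil, Equiv.Perm.one_apply]
    split_ifs <;> omega
  | succ k ih =>
    rw [omegaTilde, omegaTildeList_succ, toPerm_append, Equiv.Perm.mul_apply,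
      val_toPerm_descendingRun hk, ← omegaTilde, ih (by omega)]
    have := i.isLt
    split_ifs <;> omega

section

variable {n k : ℕ} (hk : k ≤ n)
include hk

lemma omegaTilde_apply_of_lt {a : Fin (n + 1)} (ha : (a : ℕ) < n - k) : omegaTilde n k a = a :=
  Fin.ext <| by rw [val_omegaTilde hk, if_pos ha]

lemma val_omegaTilde_of_le {a : Fin (n + 1)} (ha : n - k ≤ a) :
    (omegaTilde n k a : ℕ) = 2 * n - k - a := by
  rw [val_omegaTilde hk, if_neg (by omega)]

lemma omegaTilde_last : omegaTilde n k (Fin.last n) = ⟨n - k, by omega⟩ :=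
  Fin.ext <| by rw [val_omegaTilde_of_le hk (by simp), Fin.val_last, Fin.val_mk]; omega

lemma omegaTilde_involutive : Function.Involutive (omegaTilde n k) := by
  intro a
  ext
  have := a.isLt
  rw [val_omegaTilde hk, val_omegaTilde hk]
  split_ifs <;> omega

lemma omegaTilde_mul_self : omegaTilde n k * omegaTilde n k = 1 :=
  Equiv.ext (omegaTilde_involutive hk)

variable (π : Equiv.Perm (Fin (n + 1)))

lemma increasing_prefix_mul_omegaTilde_iff :
    (∀ a b : Fin (n + 1), a < b → (b : ℕ) < n - k →
        (π * omegaTilde n k) a < (π * omegaTilde n k) b) ↔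
      ∀ a b : Fin (n + 1), a < b → (b : ℕ) < n - k → π a < π b := by
  refine forall₂_congr fun a b => imp_congr_right fun hab => imp_congr_right fun hb => ?_
  rw [Equiv.Perm.mul_apply, Equiv.Perm.mul_apply, omegaTilde_apply_of_lt hk hb,
    omegaTilde_apply_of_lt hk (by omega)]

lemma mul_omegaTilde_last_eq_last_iff :
    (π * omegaTilde n k) (Fin.last n) = Fin.last n ↔ π ⟨n - k, by omega⟩ = Fin.last n := by
  rw [Equiv.Perm.mul_apply, omegaTilde_last hk]

lemma decreasing_tail_iff_increasing_mul_omegaTilde :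
    (∀ a b : Fin (n + 1), n - k < (a : ℕ) → a < b → π b < π a) ↔
      ∀ a b : Fin (n + 1), n - k ≤ (a : ℕ) → a < b → (b : ℕ) < n →
        (π * omegaTilde n k) a < (π * omegaTilde n k) b := by
  constructor
  · intro h a b ha hab hb
    have := val_omegaTilde_of_le hk ha
    have := val_omegaTilde_of_le hk (a := b) (by omega)
    exact h _ _ (by omega) (by rw [Fin.lt_def]; omega)
  · intro h a b ha hab
    have := b.isLt
    have := val_omegaTilde_of_le hk (a := a) (by omega)
    have := val_omegaTilde_of_le hk (a := b) (by omega)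
    simpa only [Equiv.Perm.mul_apply, omegaTilde_involutive hk _] using
      h (omegaTilde n k b) (omegaTilde n k a) (by omega) (by rw [Fin.lt_def]; omega) (by omega)

lemma stildeP_iff_shuffleInSnP_mul_omegaTilde :
    StildeP n k π ↔ ShuffleInSnP n k (π * omegaTilde n k) := by
  rw [StildeP, ShuffleInSnP, increasing_prefix_mul_omegaTilde_iff hk,
    mul_omegaTilde_last_eq_last_iff hk, decreasing_tail_iff_increasing_mul_omegaTilde hk]
  tauto

end

theorem stilde_eq_shuffles_mul_omega_general (n k : ℕ) (hk : k ≤ n) :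
    {π : Equiv.Perm (Fin (n + 1)) | StildeP n k π} =
      (fun σ => σ * toPerm (n + 1) (omegaTildeList n k)) ''
        {σ : Equiv.Perm (Fin (n + 1)) | ShuffleInSnP n k σ} := by
  have hinv : Function.Involutive (· * omegaTilde n k) := fun σ => by
    simp only [mul_assoc, omegaTilde_mul_self hk, mul_one]
  rw [← omegaTilde, Set.image_eq_preimage_of_inverse hinv.leftInverse hinv.rightInverse]
  ext π
  exact stildeP_iff_shuffleInSnP_mul_omegaTilde hk π

/-- `S̃_{n,k} = S_{n−k,k} · ω̃` inside `S_{n+1}`. -/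
theorem stilde_eq_shuffles_mul_omega (n k : ℕ) (hn : 1 ≤ n) (hk : k ≤ n) :
    {π : Equiv.Perm (Fin (n + 1)) | StildeP n k π} =
      (fun σ => σ * toPerm (n + 1) (omegaTildeList n k)) ''
        {σ : Equiv.Perm (Fin (n + 1)) | ShuffleInSnP n k σ} :=
  stilde_eq_shuffles_mul_omega_general n k hk

end Stmt
end

section
/- Let k be a field, θ ∈ ℕ, D a Dynkin datum on θ vertices with triangular bicharacter χ_D and associated character λ_D : ℤ^θ → k^× given by λ_D(α_j) = D_j. Let γ ∈ ℤ^θ and suppose m_γ := min{ m ∈ ℕ₀ : (m+1)_{χ_D(γ,γ)} = 0 } exists. For r = (r_1,…,r_θ) ∈ k^θ write t_v(r) = Π_j r_j^{n_j} for v = Σ n_j α_j (assume all r_j ≠ 0). Define Shap_γ(r) = Π_{m=1}^{m_γ} ( t_γ(r) − λ_D(γ) · χ_D(γ,γ)^{−m} ). Then Shap_γ(r) = 0 if and only if Shap_{−γ}(r) = 0. -/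
namespace Stmt

/-- A Dynkin datum on `θ` vertices over a field `k`: vertex labels `D_j ∈ k^×` and edge
labels `D_{jl} ∈ k^×`.  (The conditions `D_{jl} = D_{lj}` and `D_{jj} = D_j²` are recorded
in `IsDynkin`.) -/
structure DynkinDatum (k : Type*) [Field k] (θ : ℕ) where
  v : Fin θ → kˣ
  e : Fin θ → Fin θ → kˣ

variable {k : Type*} [Field k] {θ : ℕ}

/-- The conventions on the labels of a Dynkin datum: `D_{jl} = D_{lj}` and `D_{jj} = D_j²`. -/
def IsDynkin (D : DynkinDatum k θ) : Prop :=
  (∀ j l, D.e j l = D.e l j) ∧ (∀ j, D.e j j = D.v j * D.v j)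

/-- The q-integer `(m)_a = 1 + a + ⋯ + a^{m−1}`. -/
def qInt (a : k) (m : ℕ) : k := ∑ i ∈ Finset.range m, a ^ i

/-- The set `{ m ∈ ℕ₀ : (m+1)_{D_i} (D_i^m D_{ij} − 1) = 0 }` whose minimum is `−a_{ij}`. -/
def cartanSet (D : DynkinDatum k θ) (i j : Fin θ) : Set ℕ :=
  {m : ℕ | qInt (D.v i : k) (m + 1) * ((D.v i : k) ^ m * (D.e i j : k) - 1) = 0}

/-- The Cartan-type integers of a Dynkin datum: `a_{ii} = 2` and, for `j ≠ i`,
`a_{ij} = −min{ m : (m+1)_{D_i} (D_i^m D_{ij} − 1) = 0 }`. -/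
noncomputable def aij (D : DynkinDatum k θ) (i j : Fin θ) : ℤ :=
  if i = j then 2 else -(Int.ofNat (sInf (cartanSet D i j)))

/-- `D` is `i`-finite: the minima defining `a_{ij}` exist for all `j ≠ i`. -/
def IFinite (D : DynkinDatum k θ) (i : Fin θ) : Prop :=
  ∀ j, j ≠ i → (cartanSet D i j).Nonempty

/-- The `i`-th reflection `R_i(D)` of a Dynkin datum:
`R_i(D)_j = D_j D_{ij}^{−a_{ij}} D_i^{a_{ij}²}` and
`R_i(D)_{jl} = D_{jl} D_{il}^{−a_{ij}} D_{ij}^{−a_{il}} D_i^{2 a_{ij} a_{il}}`. -/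
noncomputable def reflect (D : DynkinDatum k θ) (i : Fin θ) : DynkinDatum k θ where
  v j := D.v j * D.e i j ^ (-aij D i j) * D.v i ^ (aij D i j ^ 2)
  e j l := D.e j l * D.e i l ^ (-aij D i j) * D.e i j ^ (-aij D i l) *
    D.v i ^ (2 * aij D i j * aij D i l)

/-- The set `{ m ∈ ℕ₀ : (m+1)_{D_i} = 0 }` whose minimum is `m_i^D`. -/
def qSet (D : DynkinDatum k θ) (i : Fin θ) : Set ℕ :=
  {m : ℕ | qInt (D.v i : k) (m + 1) = 0}

end Stmt
namespace Stmt

variable {k : Type*} [Field k] {θ : ℕ}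

/-- Values of the "triangular" bicharacter `χ_D` on pairs of standard basis vectors:
`χ_D(α_j, α_j) = D_j`, `χ_D(α_j, α_l) = D_{jl}` for `j < l`, and `χ_D(α_l, α_j) = 1`
for `j < l`. -/
def chiMat (D : DynkinDatum k θ) (j l : Fin θ) : kˣ :=
  if j = l then D.v j else if j < l then D.e j l else 1

/-- The triangular bicharacter `χ_D : ℤ^θ × ℤ^θ → k^×` (determined by its values on the
standard basis vectors). -/
def chi (D : DynkinDatum k θ) (n n' : Fin θ → ℤ) : kˣ :=
  ∏ j : Fin θ, ∏ l : Fin θ, chiMat D j l ^ (n j * n' l)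

/-- The symmetric bicharacter `χ'_D : ℤ^θ × ℤ^θ → k^×` with `χ'_D(α_j, α_l) = D_{jl}`. -/
def chi' (D : DynkinDatum k θ) (n n' : Fin θ → ℤ) : kˣ :=
  ∏ j : Fin θ, ∏ l : Fin θ, D.e j l ^ (n j * n' l)

end Stmt

namespace Stmt

variable {k : Type*} [Field k] {θ : ℕ}

/-- The character `λ_D : ℤ^θ → k^×` with `λ_D(α_j) = D_j`. -/
def lamD (D : DynkinDatum k θ) (γ : Fin θ → ℤ) : kˣ := ∏ j : Fin θ, D.v j ^ (γ j)

/-- The monomial `t_γ(r) = Π_j r_j^{γ_j}`. -/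
def tval (γ : Fin θ → ℤ) (r : Fin θ → k) : k := ∏ j : Fin θ, r j ^ (γ j)

/-- The Shapovalov factor
`Shap_γ(r) = Π_{m=1}^{m_γ} ( t_γ(r) − λ_D(γ) χ_D(γ,γ)^{−m} )`, where
`m_γ = min{ m : (m+1)_{χ_D(γ,γ)} = 0 }`. -/
noncomputable def shapFac (D : DynkinDatum k θ) (γ : Fin θ → ℤ) (r : Fin θ → k) : k :=
  ∏ m ∈ Finset.Icc 1 (sInf {m : ℕ | qInt ((chi D γ γ : kˣ) : k) (m + 1) = 0}),
    (tval γ r - ((lamD D γ : kˣ) : k) * ((chi D γ γ : kˣ) : k) ^ (-(Int.ofNat m)))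

/-!
With `q = χ_D(γ,γ) = χ_D(−γ,−γ)`, `λ = λ_D(γ)` and `t = t_γ(r)`, we have `λ_D(−γ) = λ⁻¹` and
`t_{−γ}(r) = t⁻¹`, so the factor `t⁻¹ − λ⁻¹ q^{−m}` of `Shap_{−γ}` vanishes iff `t − λ q^m` does.
Since `(m_γ+1)_q = 0` forces `q^{m_γ+1} = 1`, we have `q^m = q^{−(m_γ+1−m)}`, so the reflection
`m ↦ m_γ + 1 − m` of `[1, m_γ]` matches the vanishing factors of the two products.
-/

theorem pow_eq_one_of_qInt_eq_zero {a : k} {n : ℕ} (h : qInt a n = 0) : a ^ n = 1 := by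
  unfold qInt at h
  rw [← sub_eq_zero, ← geom_sum_mul, h, zero_mul]

theorem zpow_neg_sub_eq_pow_of_pow_eq_one {q : k} {n m : ℕ} (hq : q ^ n = 1) (hm : m ≤ n) :
    q ^ (-((n - m : ℕ) : ℤ)) = q ^ m := by
  rw [zpow_neg, zpow_natCast]
  exact inv_eq_of_mul_eq_one_right (by rw [pow_sub_mul_pow q hm, hq])

theorem inv_sub_inv_mul_zpow_eq_zero_iff (t l q : k) (m : ℤ) :
    t⁻¹ - l⁻¹ * q ^ m = 0 ↔ t - l * q ^ (-m) = 0 := by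
  rw [sub_eq_zero, sub_eq_zero, ← inv_inj, inv_inv, mul_inv, inv_inv, zpow_neg]

theorem prod_Icc_reflect {M : Type*} [CommMonoid M] (f : ℕ → M) (n : ℕ) :
    ∏ m ∈ Finset.Icc 1 n, f (n + 1 - m) = ∏ m ∈ Finset.Icc 1 n, f m := by
  refine Finset.prod_nbij' (n + 1 - ·) (n + 1 - ·) ?_ ?_ ?_ ?_ fun _ _ => rfl <;>
    · intro m
      simp only [Finset.mem_Icc]
      omega

theorem prod_Icc_inv_sub_eq_zero_iff {q : k} {n : ℕ} (hq : q ^ (n + 1) = 1) (t l : k) :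
    ∏ m ∈ Finset.Icc 1 n, (t⁻¹ - l⁻¹ * q ^ (-(m : ℤ))) = 0 ↔
      ∏ m ∈ Finset.Icc 1 n, (t - l * q ^ (-(m : ℤ))) = 0 := by
  rw [← prod_Icc_reflect, Finset.prod_eq_zero_iff, Finset.prod_eq_zero_iff]
  refine exists_congr fun m => and_congr_right fun hm => ?_
  have hmn : m ≤ n + 1 := by rw [Finset.mem_Icc] at hm; omega
  rw [zpow_neg_sub_eq_pow_of_pow_eq_one hq hmn, ← zpow_natCast,
    inv_sub_inv_mul_zpow_eq_zero_iff]

theorem chi_neg_neg (D : DynkinDatum k θ) (n n' : Fin θ → ℤ) :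
    chi D (-n) (-n') = chi D n n' := by
  simp only [chi, Pi.neg_apply, neg_mul_neg]

theorem lamD_neg (D : DynkinDatum k θ) (γ : Fin θ → ℤ) : lamD D (-γ) = (lamD D γ)⁻¹ := by
  simp only [lamD, Pi.neg_apply, zpow_neg, Finset.prod_inv_distrib]

theorem tval_neg (γ : Fin θ → ℤ) (r : Fin θ → k) : tval (-γ) r = (tval γ r)⁻¹ := by
  simp only [tval, Pi.neg_apply, zpow_neg, Finset.prod_inv_distrib]

theorem shapFac_zero_iff_neg_general {k : Type*} [Field k] {θ : ℕ}
    (D : DynkinDatum k θ) (γ : Fin θ → ℤ)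
    (hm : ({m : ℕ | qInt ((chi D γ γ : kˣ) : k) (m + 1) = 0}).Nonempty)
    (r : Fin θ → k) :
    shapFac D γ r = 0 ↔ shapFac D (-γ) r = 0 := by
  have hq := pow_eq_one_of_qInt_eq_zero (Nat.sInf_mem hm)
  simp only [shapFac, chi_neg_neg, lamD_neg, tval_neg, Units.val_inv_eq_inv_val,
    Int.ofNat_eq_natCast]
  exact (prod_Icc_inv_sub_eq_zero_iff hq _ _).symm

/-- Let `D` be a Dynkin datum, `γ ∈ ℤ^θ` with
`m_γ = min{ m : (m+1)_{χ_D(γ,γ)} = 0 }` existing, and `r ∈ (k^×)^θ`.  Then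
`Shap_γ(r) = 0` iff `Shap_{−γ}(r) = 0`. -/
theorem shapFac_zero_iff_neg {k : Type*} [Field k] {θ : ℕ}
    (D : DynkinDatum k θ) (hD : IsDynkin D) (γ : Fin θ → ℤ)
    (hm : ({m : ℕ | qInt ((chi D γ γ : kˣ) : k) (m + 1) = 0}).Nonempty)
    (r : Fin θ → k) (hr : ∀ j, r j ≠ 0) :
    shapFac D γ r = 0 ↔ shapFac D (-γ) r = 0 :=
  shapFac_zero_iff_neg_general D γ hm r

end Stmt
end
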